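/- For every n ≥ 1 and every r ∈ [0,1) there exists a complex n×n matrix T with ‖T‖ ≤ 1 and spectral radius ρ(T) ≤ r such that ‖(−I − T)^{-1}‖ ≥ (1/2)·((1+r)/(1−r))·n + 1/2. -/

import Mathlib

/-- The operator norm of a complex `n × n` matrix induced by the Euclidean norm on `ℂⁿ`. -/
noncomputable def matNorm {n : ℕ} (T : Matrix (Fin n) (Fin n) ℂ) : ℝ :=
  ‖Matrix.toEuclideanCLM (𝕜 := ℂ) T‖

open Matrix

/-!
Take `T = -φ_r(S)`, where `S` is the nilpotent lower shift on `ℂⁿ` and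
`φ_r(z) = (z + r) / (1 + r z)`. As `S` is a contraction, so is `φ_r(S)`: with `u = S y`,
`‖y + r u‖² - ‖u + r y‖² = (1 - r²) (‖y‖² - ‖u‖²) ≥ 0`. Since `φ_r(S) - r = (1 - r²) S (1 + r S)⁻¹`
is nilpotent, the spectrum of `T` is `{-r}`. Finally `-1 - T = (1 - r) (S - 1) (1 + r S)⁻¹`
sends `(k + 1 + r k)ₖ` to the constant vector `r - 1`, so testing its inverse against the
all-ones vector bounds its norm from below by
`(∑ₖ (k + 1 + r k)) / ((1 - r) n) = (n + (1 + r) n (n - 1) / 2) / ((1 - r) n)`.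
-/

lemma spectrum_subset_singleton_of_isNilpotent_sub {K A : Type*} [Field K] [Ring A] [Algebra K A]
    {a : A} {r : K} (h : IsNilpotent (a - algebraMap K A r)) : spectrum K a ⊆ {r} := by
  intro z hz
  by_contra hzr
  refine spectrum.mem_iff.mp hz ?_
  have hunit : IsUnit (algebraMap K A (z - r)) :=
    (isUnit_iff_ne_zero.mpr (sub_ne_zero.mpr hzr)).map _
  have hsplit : algebraMap K A z - a = algebraMap K A (z - r) + -(a - algebraMap K A r) := by
    rw [map_sub]; abel
  exact hsplit ▸ h.neg.isUnit_add_left_of_commute hunit (Algebra.commutes _ _).symm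

lemma norm_add_smul_le_norm_add_smul {𝕜 E : Type*} [RCLike 𝕜] [NormedAddCommGroup E]
    [InnerProductSpace 𝕜 E] {u y : E} {r : ℝ} (hr : |r| ≤ 1) (hu : ‖u‖ ≤ ‖y‖) :
    ‖u + (r : 𝕜) • y‖ ≤ ‖y + (r : 𝕜) • u‖ := by
  refine (sq_le_sq₀ (norm_nonneg _) (norm_nonneg _)).mp ?_
  rw [norm_add_sq (𝕜 := 𝕜), norm_add_sq (𝕜 := 𝕜), inner_smul_right, inner_smul_right,
    RCLike.re_ofReal_mul, RCLike.re_ofReal_mul, inner_re_symm (𝕜 := 𝕜) y u,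
    norm_smul, norm_smul, RCLike.norm_ofReal]
  have hr2 : r ^ 2 ≤ 1 := by rw [← sq_abs]; exact pow_le_one₀ (abs_nonneg r) hr
  have hu2 : ‖u‖ ^ 2 ≤ ‖y‖ ^ 2 := pow_le_pow_left₀ (norm_nonneg u) hu 2
  nlinarith [mul_nonneg (sub_nonneg.mpr hr2) (sub_nonneg.mpr hu2), sq_abs r]

lemma ContinuousLinearMap.opNorm_mul_le_one_of_norm_apply_le {𝕜 E : Type*} [RCLike 𝕜]
    [NormedAddCommGroup E] [NormedSpace 𝕜 E] {f g h : E →L[𝕜] E}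
    (hfg : ∀ y, ‖f y‖ ≤ ‖g y‖) (hgh : g * h = 1) : ‖f * h‖ ≤ 1 :=
  opNorm_le_bound _ zero_le_one fun x => by
    have hx : g (h x) = x := by simpa using congr($hgh x)
    simpa [hx] using hfg (h x)

section LowerShift

variable (R : Type*) [Semiring R] (n : ℕ)

def lowerShift : Matrix (Fin n) (Fin n) R :=
  of fun i j => if (i : ℕ) = j + 1 then 1 else 0

variable {R n}

@[simp]
lemma lowerShift_mulVec_zero (v : Fin (n + 1) → R) : (lowerShift R (n + 1) *ᵥ v) 0 = 0 := by
  simp [mulVec, dotProduct, lowerShift]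

@[simp]
lemma lowerShift_mulVec_succ (v : Fin (n + 1) → R) (i : Fin n) :
    (lowerShift R (n + 1) *ᵥ v) i.succ = v i.castSucc := by
  have hsucc (j : Fin (n + 1)) : (i.succ : ℕ) = j + 1 ↔ i.castSucc = j := by simp [Fin.ext_iff]
  simp only [mulVec, dotProduct, lowerShift, of_apply, hsucc, ite_mul, one_mul, zero_mul,
    Finset.sum_ite_eq, Finset.mem_univ, if_true]

lemma lowerShift_pow_mulVec_of_lt (v : Fin n → R) {k : ℕ} {i : Fin n} (hi : (i : ℕ) < k) :
    (lowerShift R n ^ k *ᵥ v) i = 0 := by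
  rcases n with _ | n
  · exact i.elim0
  induction k generalizing i with
  | zero => omega
  | succ k ih =>
    rw [pow_succ', ← mulVec_mulVec]
    induction i using Fin.cases with
    | zero => simp
    | succ i => simpa using ih (i := i.castSucc) (by simp at hi ⊢; omega)

lemma lowerShift_pow_self : lowerShift R n ^ n = 0 :=
  ext_iff_mulVec.mpr fun v => funext fun i => by
    simpa using lowerShift_pow_mulVec_of_lt v i.isLt

lemma isNilpotent_lowerShift : IsNilpotent (lowerShift R n) :=
  ⟨n, lowerShift_pow_self⟩

lemma lowerShift_mulVec_natCast_add_one :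
    lowerShift R n *ᵥ (fun i : Fin n => ((i : ℕ) : R) + 1) = fun i : Fin n => ((i : ℕ) : R) := by
  rcases n with _ | n
  · exact funext fun i => i.elim0
  funext i
  induction i using Fin.cases with
  | zero => simp
  | succ i => simp

end LowerShift

lemma norm_toEuclideanCLM_lowerShift_apply_le {𝕜 : Type*} [RCLike 𝕜] {n : ℕ}
    (x : EuclideanSpace 𝕜 (Fin n)) :
    ‖toEuclideanCLM (𝕜 := 𝕜) (lowerShift 𝕜 n) x‖ ≤ ‖x‖ := by
  refine (sq_le_sq₀ (norm_nonneg _) (norm_nonneg _)).mp ?_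
  rw [EuclideanSpace.norm_sq_eq, EuclideanSpace.norm_sq_eq]
  rcases n with _ | n
  · simp
  rw [Fin.sum_univ_succ, Fin.sum_univ_castSucc (f := fun i => ‖x i‖ ^ 2)]
  simp only [ofLp_toEuclideanCLM, lowerShift_mulVec_zero, lowerShift_mulVec_succ]
  simp

section BlaschkeShift

variable {K : Type*} [Field K] {n : ℕ}

noncomputable def blaschkeShift (r : K) (n : ℕ) : Matrix (Fin n) (Fin n) K :=
  (lowerShift K n + r • 1) * (1 + r • lowerShift K n)⁻¹

lemma isUnit_one_add_smul_lowerShift (r : K) : IsUnit (1 + r • lowerShift K n) :=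
  (isNilpotent_lowerShift.smul r).isUnit_one_add

lemma blaschkeShift_sub_smul_one (r c : K) :
    blaschkeShift r n - c • 1 =
      (lowerShift K n + r • 1 - c • (1 + r • lowerShift K n)) * (1 + r • lowerShift K n)⁻¹ := by
  have hB := (isUnit_iff_isUnit_det _).mp (isUnit_one_add_smul_lowerShift (n := n) r)
  rw [blaschkeShift, sub_mul, smul_mul_assoc, mul_nonsing_inv _ hB]

lemma isNilpotent_blaschkeShift_sub (r : K) :
    IsNilpotent (blaschkeShift r n - algebraMap K _ r) := by
  obtain ⟨B, hB⟩ := isUnit_one_add_smul_lowerShift (n := n) r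
  have hcomm : Commute (lowerShift K n) (1 + r • lowerShift K n)⁻¹ := by
    rw [← hB, ← coe_units_inv]
    exact Commute.units_inv_right <|
      hB ▸ (Commute.one_right _).add_right ((Commute.refl _).smul_right r)
  rw [Algebra.algebraMap_eq_smul_one, blaschkeShift_sub_smul_one,
    show lowerShift K n + r • 1 - r • (1 + r • lowerShift K n) = (1 - r ^ 2) • lowerShift K n by
      module, smul_mul_assoc]
  exact (hcomm.isNilpotent_mul_right isNilpotent_lowerShift).smul _

lemma spectrum_blaschkeShift_subset (r : K) : spectrum K (blaschkeShift r n) ⊆ {r} :=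
  spectrum_subset_singleton_of_isNilpotent_sub (isNilpotent_blaschkeShift_sub r)

lemma isUnit_blaschkeShift_sub_one {r : K} (hr : r ≠ 1) : IsUnit (blaschkeShift r n - 1) := by
  have h1 : (1 : K) ∉ spectrum K (blaschkeShift r n) := fun h =>
    hr (spectrum_blaschkeShift_subset r h).symm
  simpa using (spectrum.notMem_iff.mp h1).neg

lemma blaschkeShift_sub_one_mulVec (r : K) :
    (blaschkeShift r n - 1) *ᵥ (fun i : Fin n => (i : K) + 1 + r * i) = fun _ => r - 1 := by
  have hB := (isUnit_iff_isUnit_det _).mp (isUnit_one_add_smul_lowerShift (n := n) r)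
  have hx : (fun i : Fin n => (i : K) + 1 + r * i) =
      (1 + r • lowerShift K n) *ᵥ fun i : Fin n => (i : K) + 1 := by
    rw [add_mulVec, one_mulVec, smul_mulVec, lowerShift_mulVec_natCast_add_one]
    rfl
  have hsub := blaschkeShift_sub_smul_one (n := n) r 1
  rw [one_smul, one_smul] at hsub
  rw [hx, hsub, mulVec_mulVec, Matrix.mul_assoc, nonsing_inv_mul _ hB, Matrix.mul_one]
  simp only [sub_mulVec, add_mulVec, smul_mulVec, one_mulVec, lowerShift_mulVec_natCast_add_one]
  funext i
  simp only [Pi.sub_apply, Pi.add_apply, Pi.smul_apply, smul_eq_mul]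
  ring

end BlaschkeShift

lemma norm_toEuclideanCLM_blaschkeShift_le {𝕜 : Type*} [RCLike 𝕜] {n : ℕ} {r : ℝ}
    (hr : |r| ≤ 1) :
    ‖toEuclideanCLM (𝕜 := 𝕜) (blaschkeShift (r : 𝕜) n)‖ ≤ 1 := by
  have hB := (isUnit_iff_isUnit_det _).mp (isUnit_one_add_smul_lowerShift (n := n) (r : 𝕜))
  rw [blaschkeShift, map_mul]
  refine ContinuousLinearMap.opNorm_mul_le_one_of_norm_apply_le (fun y => ?_)
    (by rw [← map_mul, mul_nonsing_inv _ hB, map_one])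
  rw [map_add, map_add, map_smul, map_smul, map_one]
  simpa [add_comm] using norm_add_smul_le_norm_add_smul (𝕜 := 𝕜) hr
    (norm_toEuclideanCLM_lowerShift_apply_le y)

lemma norm_sum_le_mul_norm_toEuclideanCLM_inv {𝕜 ι : Type*} [RCLike 𝕜] [Fintype ι]
    [DecidableEq ι] {A : Matrix ι ι 𝕜} (hA : IsUnit A) {x : ι → 𝕜} {c : 𝕜}
    (hx : A *ᵥ x = fun _ => c) :
    ‖∑ i, x i‖ ≤ ‖c‖ * Fintype.card ι * ‖toEuclideanCLM (𝕜 := 𝕜) A⁻¹‖ := by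
  have hinv : A⁻¹ *ᵥ (fun _ => c) = x := by
    rw [← hx, mulVec_mulVec, nonsing_inv_mul _ ((isUnit_iff_isUnit_det _).mp hA), one_mulVec]
  set f := toEuclideanCLM (𝕜 := 𝕜) A⁻¹
  set e : EuclideanSpace 𝕜 ι := WithLp.toLp 2 fun _ => 1
  have he : ‖e‖ ^ 2 = Fintype.card ι := by simp [e, EuclideanSpace.norm_sq_eq]
  have hce : c • e = WithLp.toLp 2 fun _ => c := by ext; simp [e]
  calc ‖∑ i, x i‖ = ‖inner 𝕜 e (f (c • e))‖ := by
        simp [hce, f, toEuclideanCLM_toLp, hinv, e, EuclideanSpace.inner_toLp_toLp, dotProduct]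
    _ ≤ ‖e‖ * (‖f‖ * ‖c • e‖) :=
        (norm_inner_le_norm _ _).trans (by gcongr; exact f.le_opNorm _)
    _ = ‖c‖ * Fintype.card ι * ‖f‖ := by rw [norm_smul, ← he]; ring

lemma sum_range_add_one_add_mul (r : ℝ) (n : ℕ) :
    ∑ i ∈ Finset.range n, ((i : ℝ) + 1 + r * i) = n + (1 + r) * n * (n - 1) / 2 := by
  induction n with
  | zero => simp
  | succ n ih => rw [Finset.sum_range_succ, ih]; push_cast; ring

lemma le_norm_toEuclideanCLM_inv_blaschkeShift_sub_one {𝕜 : Type*} [RCLike 𝕜] {n : ℕ}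
    (hn : 1 ≤ n) {r : ℝ} (hr : r < 1) :
    1 / 2 * ((1 + r) / (1 - r)) * n + 1 / 2 ≤
      ‖toEuclideanCLM (𝕜 := 𝕜) (n := Fin n) (blaschkeShift (r : 𝕜) n - 1)⁻¹‖ := by
  have hunit : IsUnit (blaschkeShift (r : 𝕜) n - 1) :=
    isUnit_blaschkeShift_sub_one (by exact_mod_cast hr.ne)
  have hsum :=
    norm_sum_le_mul_norm_toEuclideanCLM_inv hunit (blaschkeShift_sub_one_mulVec (r : 𝕜))
  have hreal :
      ∑ i : Fin n, ((i : 𝕜) + 1 + r * i) = ((n + (1 + r) * n * (n - 1) / 2 : ℝ) : 𝕜) := by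
    rw [← sum_range_add_one_add_mul, ← Fin.sum_univ_eq_sum_range]
    push_cast
    rfl
  have hc : ‖(r : 𝕜) - 1‖ = 1 - r := by
    rw [← RCLike.ofReal_one, ← RCLike.ofReal_sub, RCLike.norm_ofReal, abs_of_neg (by linarith),
      neg_sub]
  rw [hreal, RCLike.norm_ofReal, Fintype.card_fin, hc] at hsum
  have hn' : (0 : ℝ) < n := by exact_mod_cast hn
  have h1r : (0 : ℝ) < 1 - r := by linarith
  calc 1 / 2 * ((1 + r) / (1 - r)) * n + 1 / 2
      = (n + (1 + r) * n * (n - 1) / 2) / ((1 - r) * n) := by field_simp; ring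
    _ ≤ _ := by
      rw [div_le_iff₀ (by positivity)]
      nlinarith [le_abs_self ((n : ℝ) + (1 + r) * n * (n - 1) / 2)]

theorem stmt8 (n : ℕ) (hn : 1 ≤ n) (r : ℝ) (hr : r ∈ Set.Ico (0 : ℝ) 1) :
    ∃ T : Matrix (Fin n) (Fin n) ℂ, matNorm T ≤ 1 ∧
      spectralRadius ℂ T ≤ ENNReal.ofReal r ∧
      IsUnit (-(1 : Matrix (Fin n) (Fin n) ℂ) - T) ∧
      (1 / 2) * ((1 + r) / (1 - r)) * n + 1 / 2 ≤
        matNorm (-(1 : Matrix (Fin n) (Fin n) ℂ) - T)⁻¹ := by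
  obtain ⟨hr0, hr1⟩ := hr
  have hneg : -1 - -blaschkeShift (r : ℂ) n = blaschkeShift (r : ℂ) n - 1 := by abel
  refine ⟨-blaschkeShift (r : ℂ) n, ?_, ?_, ?_, ?_⟩
  · rw [matNorm, map_neg, norm_neg]
    exact norm_toEuclideanCLM_blaschkeShift_le (abs_le.mpr ⟨by linarith, hr1.le⟩)
  · refine iSup₂_le fun z hz => ?_
    rw [← spectrum.neg_eq] at hz
    rw [← neg_neg z, spectrum_blaschkeShift_subset _ hz, nnnorm_neg, Complex.nnnorm_real,
      ← enorm_eq_nnnorm, Real.enorm_eq_ofReal hr0]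
  · rw [hneg]
    exact isUnit_blaschkeShift_sub_one (by exact_mod_cast hr1.ne)
  · rw [hneg]
    exact le_norm_toEuclideanCLM_inv_blaschkeShift_sub_one hn hr1
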